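/- arXiv:0806.4214 — 2 statements merged into one kernel-verified Lean document; each statement's English description precedes it below -/
import Mathlib

section
/- (Augmentation nulls the shifted symplectic self-product) Let u(D) ∈ (Z_2(D))^{2n} with shifted symplectic self-product (u⊙u)(D), and let (u⊙u)(D)^+ := Σ_{i>0} (u⊙u)_i D^i denote its strictly positive-degree part. Define the augmented vector u'(D) ∈ (Z_2(D))^{2(n+1)} by appending (u⊙u)(D)^+ to the Z-part and 1 to the X-part. Then (u'⊙u')(D) = 0. -/
open Finset

/-- Laurent polynomials over `F₂`, i.e. `ℤ₂(D)`. -/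
abbrev L2 := LaurentPolynomial (ZMod 2)

/-- Time reversal: substitution of `D⁻¹` for `D` in a Laurent polynomial. -/
noncomputable def rev (f : L2) : L2 := LaurentPolynomial.invert f

/-- The shifted symplectic product of `u = [z|x]` and `v = [z'|x']` in `(ℤ₂(D))^{2n}`:
`(u ⊙ v)(D) = z(D) · x'(D⁻¹) + x(D) · z'(D⁻¹)`. -/
noncomputable def ssp (n : ℕ) (u v : (Fin n → L2) × (Fin n → L2)) : L2 :=
  ∑ i, (u.1 i * rev (v.2 i) + u.2 i * rev (v.1 i))

/-- The strictly positive-degree part `f(D)⁺ = Σ_{i>0} fᵢ Dⁱ` of a Laurent polynomial. -/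
noncomputable def posPart (f : L2) : L2 := AddMonoidAlgebra.ofCoeff (Finsupp.filter (fun i : ℤ => 0 < i) f.coeff)

/-! `u ⊙ u` is self-reciprocal with zero constant term, hence equals `p + rev p` for its
positive part `p`. The appended coordinate contributes exactly `p · rev 1 + 1 · rev p = p + rev p`,
which cancels `u ⊙ u` in characteristic two. -/

instance : CharP L2 2 :=
  charP_of_injective_algebraMap (algebraMap (ZMod 2) L2).injective 2

lemma rev_coeff (f : L2) (k : ℤ) : (rev f).coeff k = f.coeff (-k) :=
  LaurentPolynomial.invert_apply f k

lemma rev_mul (f g : L2) : rev (f * g) = rev f * rev g := map_mul _ f g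

lemma rev_rev (f : L2) : rev (rev f) = f := LaurentPolynomial.involutive_invert f

lemma rev_one : rev (1 : L2) = 1 := map_one LaurentPolynomial.invert

lemma rev_ssp (n : ℕ) (u v : (Fin n → L2) × (Fin n → L2)) :
    rev (ssp n u v) = ssp n v u := by
  simp only [ssp, rev, map_sum, map_add, map_mul, LaurentPolynomial.involutive_invert _]
  exact Finset.sum_congr rfl fun i _ => by ring

lemma ssp_snoc (n : ℕ) (z x z' x' : Fin n → L2) (a b a' b' : L2) :
    ssp (n + 1) (Fin.snoc z a, Fin.snoc x b) (Fin.snoc z' a', Fin.snoc x' b')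
      = ssp n (z, x) (z', x') + (a * rev b' + b * rev a') := by
  simp only [ssp, Fin.sum_univ_castSucc, Fin.snoc_castSucc, Fin.snoc_last]

lemma coeff_zero_add_rev (f : L2) : (f + rev f).coeff 0 = 0 := by
  rw [AddMonoidAlgebra.coeff_add, Finsupp.add_apply, rev_coeff, neg_zero,
    CharTwo.add_self_eq_zero]

-- Each summand `z · rev x + x · rev z` is `g + rev g`, whose constant term cancels in
-- characteristic two.
lemma ssp_self_coeff_zero (n : ℕ) (u : (Fin n → L2) × (Fin n → L2)) :
    (ssp n u u).coeff 0 = 0 := by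
  have hsummand (i : Fin n) : u.2 i * rev (u.1 i) = rev (u.1 i * rev (u.2 i)) := by
    rw [rev_mul, rev_rev, mul_comm]
  simp only [ssp, hsummand, AddMonoidAlgebra.coeff_sum, Finsupp.finsetSum_apply,
    coeff_zero_add_rev, Finset.sum_const_zero]

lemma posPart_add_rev (f : L2) (hrev : rev f = f) (h0 : f.coeff 0 = 0) :
    posPart f + rev (posPart f) = f := by
  have hneg (m : ℤ) : f.coeff (-m) = f.coeff m := by rw [← rev_coeff, hrev]
  ext k
  rw [AddMonoidAlgebra.coeff_add, Finsupp.add_apply, rev_coeff]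
  change (Finsupp.filter (fun i : ℤ => 0 < i) f.coeff) k
      + (Finsupp.filter (fun i : ℤ => 0 < i) f.coeff) (-k) = f.coeff k
  rw [Finsupp.filter_apply, Finsupp.filter_apply]
  rcases lt_trichotomy k 0 with hk | rfl | hk
  · rw [if_neg (by omega), if_pos (by omega), zero_add, hneg]
  · simp [h0]
  · rw [if_pos hk, if_neg (by omega), add_zero]

/-- Augmentation nulls the shifted symplectic self-product: for `u(D) ∈ (ℤ₂(D))^{2n}`,
the augmented vector `u'(D) ∈ (ℤ₂(D))^{2(n+1)}`, obtained by appending the strictly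
positive part `(u ⊙ u)(D)⁺` to the `Z`-part of `u` and `1` to its `X`-part, satisfies
`(u' ⊙ u')(D) = 0`. -/
theorem augmentation_nulls_ssp (n : ℕ) (u : (Fin n → L2) × (Fin n → L2)) :
    ssp (n + 1) (Fin.snoc u.1 (posPart (ssp n u u)), Fin.snoc u.2 1)
        (Fin.snoc u.1 (posPart (ssp n u u)), Fin.snoc u.2 1) = 0 := by
  have hsplit : posPart (ssp n u u) + rev (posPart (ssp n u u)) = ssp n u u :=
    posPart_add_rev _ (rev_ssp n u u) (ssp_self_coeff_zero n u)
  rw [ssp_snoc, rev_one, mul_one, one_mul, hsplit, CharTwo.add_self_eq_zero]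
end

section
/- (Expanded shifted symplectic product matrix) Let H(D) = [Z(D)|X(D)] be an (n−k)×2n matrix of Laurent polynomials over F_2 with shifted symplectic product matrix Ω(D) = Z(D)X^T(D^{-1}) + X(D)Z^T(D^{-1}). For the l-expanded check matrix H_l(D) = ⌊R_l(D^{1/l}) H(D^{1/l}) C_l(D^{1/l})⌋, the shifted symplectic product matrix satisfies Ω_l(D) = ⌊R_l(D^{1/l}) Ω(D^{1/l}) R_l^T(D^{-1/l})⌋. -/
open Matrix LaurentPolynomial

/-- The flooring operation `⌊·⌋`: null the coefficients of all fractional powers of `D`,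
keeping only the monomials `t^m` with `l ∣ m`. -/
noncomputable def fl (l : ℕ) (f : L2) : L2 :=
  AddMonoidAlgebra.ofCoeff (Finsupp.filter (fun m : ℤ => (l : ℤ) ∣ m) f.coeff)

/-- The matrix `R_l(D^{1/l})`: the block column `[D⁰·I; D^{1/l}·I; …; D^{(l-1)/l}·I]`
with `m × m` identity blocks, written in the variable `t = D^{1/l}`. -/
noncomputable def Rl (l m : ℕ) : Matrix (Fin l × Fin m) (Fin m) L2 :=
  Matrix.of fun p r => if p.2 = r then T ((p.1 : ℤ)) else 0

/-- The matrix `C'_l(D^{1/l}) = [D⁰·I, D^{-1/l}·I, …, D^{-(l-1)/l}·I]` with `n × n`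
identity blocks, written in the variable `t = D^{1/l}`. -/
noncomputable def Cl' (l n : ℕ) : Matrix (Fin n) (Fin l × Fin n) L2 :=
  Matrix.of fun c q => if c = q.2 then T (-(q.1 : ℤ)) else 0

/-- The shifted symplectic product matrix of a check matrix with `Z`-part `Z` and
`X`-part `X`: `Ω = Z Xᵀ(D⁻¹) + X Zᵀ(D⁻¹)` (here written in the variable `D^{1/l}`). -/
noncomputable def sspMatrix {α β : Type} [Fintype β]
    (Z X : Matrix α β L2) : Matrix α α L2 :=
  Z * (X.map rev)ᵀ + X * (Z.map rev)ᵀ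

/-! For monomials `t^a`, `t^b` exactly one `j < l` makes `t^{a-j}` integral, namely
`j = a mod l`, and then `t^{j+b}` is integral iff `t^{a+b}` is; by bilinearity this gives the
product rule `⌊f g⌋ = ∑_{j<l} ⌊t^{-j} f⌋ ⌊t^j g⌋`. The entry `((i, r), (i', r'))` of a cross term
`⌊R_l A C'_l⌋ ⌊R_l B C'_l⌋ᵀ(t⁻¹)` of `Ω_l` is `∑_c ∑_j ⌊t^{i-j} A_{rc}⌋ ⌊t^{j-i'} B_{r'c}(t⁻¹)⌋`,
which the product rule collapses to `∑_c ⌊t^{i-i'} A_{rc} B_{r'c}(t⁻¹)⌋`: the corresponding entry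
of `⌊R_l A Bᵀ(t⁻¹) R_lᵀ(t⁻¹)⌋`, since `R_lᵀ(t⁻¹) = C'_l`. -/

section Flooring

variable {l : ℕ}

lemma fl_add (f g : L2) : fl l (f + g) = fl l f + fl l g := by
  simp only [fl, AddMonoidAlgebra.coeff_add, Finsupp.filter_add, AddMonoidAlgebra.ofCoeff_add]

lemma fl_zero : fl l 0 = 0 := by
  simp [fl, Finsupp.filter_zero]

lemma fl_sum {ι : Type*} (s : Finset ι) (f : ι → L2) :
    fl l (∑ i ∈ s, f i) = ∑ i ∈ s, fl l (f i) :=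
  map_sum (AddMonoidHom.mk' (fl l) fl_add) f s

lemma fl_single (a : ℤ) (r : ZMod 2) :
    fl l (.single a r) = if (l : ℤ) ∣ a then .single a r else 0 := by
  unfold fl
  split_ifs with h
  · rw [AddMonoidAlgebra.coeff_single, Finsupp.filter_single_of_pos _ h]; rfl
  · rw [AddMonoidAlgebra.coeff_single, Finsupp.filter_single_of_neg _ h]; rfl

lemma rev_fl (f : L2) : rev (fl l f) = fl l (rev f) := by
  ext a
  simp [rev, fl, Finsupp.filter_apply]

lemma T_mul_single (a b : ℤ) (r : ZMod 2) : T a * .single b r = (.single (a + b) r : L2) := by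
  rw [T, AddMonoidAlgebra.single_mul_single, one_mul]

lemma dvd_sub_fin_iff (a : ℤ) (j : Fin l) :
    (l : ℤ) ∣ a - j ↔ (j : ℤ) = a % l := by
  rw [← Int.modEq_iff_dvd, Int.ModEq, Int.emod_eq_of_lt (by omega) (by omega)]

lemma fl_single_mul_single (hl : 0 < l) (a b : ℤ) (r s : ZMod 2) :
    fl l (.single a r * .single b s) =
      ∑ j : Fin l, fl l (T (-j) * .single a r) * fl l (T j * .single b s) := by
  have h₀ : 0 ≤ a % l := Int.emod_nonneg a (by omega)
  have h₁ : a % l < l := Int.emod_lt_of_pos a (by omega)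
  let j₀ : Fin l := ⟨(a % l).toNat, by omega⟩
  have hj₀ : (j₀ : ℤ) = a % l := by simp [j₀]; omega
  have hdvd : (l : ℤ) ∣ a - j₀ := (dvd_sub_fin_iff a j₀).2 hj₀
  rw [Finset.sum_eq_single j₀]
  · have hb : (l : ℤ) ∣ j₀ + b ↔ (l : ℤ) ∣ a + b := by
      rw [show a + b = (a - j₀) + (j₀ + b) by ring, dvd_add_right hdvd]
    simp only [AddMonoidAlgebra.single_mul_single, T_mul_single, fl_single, ← sub_eq_neg_add,
      if_pos hdvd, hb]
    split_ifs
    · rw [AddMonoidAlgebra.single_mul_single]; ring_nf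
    · rw [mul_zero]
  · intro j _ hj
    have : ¬ (l : ℤ) ∣ a - j := fun h =>
      hj (Fin.ext (by have := (dvd_sub_fin_iff a j).1 h; omega))
    rw [T_mul_single, fl_single, neg_add_eq_sub, if_neg this, zero_mul]
  · simp

theorem fl_mul (hl : 0 < l) (f g : L2) :
    fl l (f * g) = ∑ j : Fin l, fl l (T (-j) * f) * fl l (T j * g) := by
  induction f using AddMonoidAlgebra.induction_linear with
  | zero => simp [fl_zero]
  | add f₁ f₂ h₁ h₂ => simp only [add_mul, mul_add, fl_add, h₁, h₂, Finset.sum_add_distrib]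
  | single a r =>
    induction g using AddMonoidAlgebra.induction_linear with
    | zero => simp [fl_zero]
    | add g₁ g₂ h₁ h₂ => simp only [mul_add, fl_add, h₁, h₂, Finset.sum_add_distrib]
    | single b s => exact fl_single_mul_single hl a b r s

end Flooring

section Expansion

variable {l m n : ℕ}

lemma Rl_map_rev_transpose : ((Rl l m).map rev)ᵀ = Cl' l m := by
  ext c q
  simp [Rl, Cl', rev, apply_ite invert, eq_comm]

lemma Rl_mul_mul_Cl'_apply (A : Matrix (Fin m) (Fin n) L2) (p : Fin l × Fin m)
    (q : Fin l × Fin n) : (Rl l m * A * Cl' l n) p q = T (p.1 - q.1) * A p.2 q.2 := by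
  simp only [Matrix.mul_apply, Rl, Cl', Matrix.of_apply, ite_mul, mul_ite, zero_mul, mul_zero,
    Finset.sum_ite_eq, Finset.sum_ite_eq', Finset.mem_univ, if_true]
  rw [T_sub]
  ring

lemma fl_Rl_mul_mul_Cl'_mul_map_rev (hl : 0 < l) (A B : Matrix (Fin m) (Fin n) L2) :
    (Rl l m * A * Cl' l n).map (fl l) * (((Rl l m * B * Cl' l n).map (fl l)).map rev)ᵀ
      = (Rl l m * (A * (B.map rev)ᵀ) * ((Rl l m).map rev)ᵀ).map (fl l) := by
  ext ⟨i, r⟩ ⟨i', r'⟩ : 1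
  rw [Rl_map_rev_transpose, Matrix.map_apply, Rl_mul_mul_Cl'_apply, Matrix.mul_apply,
    Matrix.mul_apply, Finset.mul_sum, fl_sum, Fintype.sum_prod_type_right]
  simp only [Matrix.map_apply, Matrix.transpose_apply, Rl_mul_mul_Cl'_apply, rev_fl]
  refine Finset.sum_congr rfl fun c _ => ?_
  have hsplit : T (i - i') * (A r c * rev (B r' c))
      = (T i * A r c) * (T (-i') * rev (B r' c)) := by
    rw [T_sub]; ring
  rw [hsplit, fl_mul hl]
  refine Finset.sum_congr rfl fun j _ => ?_
  rw [rev, map_mul, invert_T, ← mul_assoc, ← mul_assoc, ← T_add, ← T_add, ← rev]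
  ring_nf

end Expansion

/-- Expanded shifted symplectic product matrix: if `H(D) = [Z(D) | X(D)]` has shifted
symplectic product matrix `Ω(D)`, then the `l`-expanded check matrix
`H_l(D) = ⌊R_l(D^{1/l}) H(D^{1/l}) C_l(D^{1/l})⌋`, whose `Z`- and `X`-parts are
`Z_l = ⌊R_l Z C'_l⌋` and `X_l = ⌊R_l X C'_l⌋`, has shifted symplectic product matrix
`Ω_l(D) = ⌊R_l(D^{1/l}) Ω(D^{1/l}) R_lᵀ(D^{-1/l})⌋`. -/
theorem expanded_ssp_matrix (l m n : ℕ) (hl : 0 < l)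
    (Z X : Matrix (Fin m) (Fin n) L2) :
    sspMatrix ((Rl l m * Z * Cl' l n).map (fl l)) ((Rl l m * X * Cl' l n).map (fl l))
      = (Rl l m * sspMatrix Z X * ((Rl l m).map rev)ᵀ).map (fl l) := by
  rw [sspMatrix, sspMatrix, fl_Rl_mul_mul_Cl'_mul_map_rev hl, fl_Rl_mul_mul_Cl'_mul_map_rev hl,
    Matrix.mul_add, Matrix.add_mul, Matrix.map_add _ fl_add]
end
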